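/- arXiv:2604.09899 — 2 statements merged into one kernel-verified Lean document; each statement's English description precedes it below -/
import Mathlib

section
/- Let 0 < a < 1 and for j ∈ {1,2} let S_j ∈ (0,1) and T_j > 0 with S_1 ≤ S_2 and T_1 ≠ T_2, and define f_j(p) = (S_j·log p + (1−S_j)·log(1−p)) / (T_j·log a) for p ∈ (0,1). Then the equation f_1(p) = f_2(p) has at most two solutions p ∈ (0,1). -/
/-!
Clearing denominators turns `f₁ p = f₂ p` into `A log p + B log (1 - p) = 0` with
`A + B = T₂ - T₁ ≠ 0`. The derivative of the left side is `(A - (A + B) p) / (p (1 - p))`,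
which vanishes at most once on `(0, 1)`, so by Rolle's theorem the left side has at most two zeros.
-/

open Real Set

theorem Set.Subsingleton.exists_subset_singleton {α : Type*} [Nonempty α] {s : Set α}
    (hs : s.Subsingleton) : ∃ x, s ⊆ {x} := by
  rcases hs.eq_empty_or_singleton with rfl | ⟨x, rfl⟩
  · exact ⟨Classical.arbitrary α, empty_subset _⟩
  · exact ⟨x, subset_rfl⟩

theorem exists_zeros_subset_pair_of_hasDerivAt {f f' : ℝ → ℝ} {s : Set ℝ} (hs : s.OrdConnected)
    (hf : ∀ x ∈ s, HasDerivAt f (f' x) x) (hf' : {x ∈ s | f' x = 0}.Subsingleton) :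
    ∃ x y, ∀ p ∈ s, f p = 0 → p = x ∨ p = y := by
  obtain ⟨t, ht⟩ := hf'.exists_subset_singleton
  -- By Rolle, the only critical point `t` separates any two zeros.
  have between : ∀ p ∈ s, ∀ q ∈ s, p < q → f p = 0 → f q = 0 → p < t ∧ t < q := by
    intro p hp q hq hpq hfp hfq
    have hIcc : Icc p q ⊆ s := hs.out hp hq
    obtain ⟨c, hc, hfc⟩ := exists_hasDerivAt_eq_zero hpq
      (fun x hx ↦ (hf x (hIcc hx)).continuousAt.continuousWithinAt) (hfp.trans hfq.symm)
      (fun x hx ↦ hf x (hIcc (Ioo_subset_Icc_self hx)))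
    have hct : c = t := ht ⟨hIcc (Ioo_subset_Icc_self hc), hfc⟩
    exact ⟨hct ▸ hc.1, hct ▸ hc.2⟩
  have below : {p ∈ s | f p = 0 ∧ p ≤ t}.Subsingleton := by
    intro p ⟨hp, hfp, hpt⟩ q ⟨hq, hfq, hqt⟩
    by_contra hne
    rcases lt_or_gt_of_ne hne with hpq | hqp
    · exact (between p hp q hq hpq hfp hfq).2.not_ge hqt
    · exact (between q hq p hp hqp hfq hfp).2.not_ge hpt
  have above : {p ∈ s | f p = 0 ∧ t ≤ p}.Subsingleton := by
    intro p ⟨hp, hfp, htp⟩ q ⟨hq, hfq, htq⟩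
    by_contra hne
    rcases lt_or_gt_of_ne hne with hpq | hqp
    · exact (between p hp q hq hpq hfp hfq).1.not_ge htp
    · exact (between q hq p hp hqp hfq hfp).1.not_ge htq
  obtain ⟨x, hx⟩ := below.exists_subset_singleton
  obtain ⟨y, hy⟩ := above.exists_subset_singleton
  refine ⟨x, y, fun p hp hfp ↦ ?_⟩
  rcases le_total p t with hpt | htp
  · exact Or.inl (hx ⟨hp, hfp, hpt⟩)
  · exact Or.inr (hy ⟨hp, hfp, htp⟩)

theorem hasDerivAt_mul_log_add_mul_log_one_sub (A B : ℝ) {p : ℝ} (hp₀ : p ≠ 0) (hp₁ : p ≠ 1) :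
    HasDerivAt (fun q ↦ A * log q + B * log (1 - q)) ((A - (A + B) * p) / (p * (1 - p))) p := by
  have hp₁' : 1 - p ≠ 0 := sub_ne_zero.mpr hp₁.symm
  have h : HasDerivAt (fun q ↦ A * log q + B * log (1 - q)) (A * p⁻¹ + B * (-1 / (1 - p))) p :=
    ((hasDerivAt_log hp₀).const_mul A).add
      ((((hasDerivAt_id' p).const_sub 1).log hp₁').const_mul B)
  convert h using 1
  field_simp
  ring

theorem exists_zeros_subset_pair_mul_log_add_mul_log_one_sub {A B : ℝ} (hAB : A + B ≠ 0) :
    ∃ x y, ∀ p ∈ Ioo (0 : ℝ) 1, A * log p + B * log (1 - p) = 0 → p = x ∨ p = y := by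
  refine exists_zeros_subset_pair_of_hasDerivAt ordConnected_Ioo
    (fun p hp ↦ hasDerivAt_mul_log_add_mul_log_one_sub A B hp.1.ne' hp.2.ne) ?_
  intro p ⟨hp, hp'⟩ q ⟨hq, hq'⟩
  have hp₀ : p * (1 - p) ≠ 0 := mul_ne_zero hp.1.ne' (sub_ne_zero.mpr hp.2.ne')
  have hq₀ : q * (1 - q) ≠ 0 := mul_ne_zero hq.1.ne' (sub_ne_zero.mpr hq.2.ne')
  rw [div_eq_zero_iff, or_iff_left hp₀] at hp'
  rw [div_eq_zero_iff, or_iff_left hq₀] at hq'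
  exact mul_left_cancel₀ hAB (by linarith)

theorem stmt1_general (a S₁ S₂ T₁ T₂ : ℝ) (ha : 0 < a) (ha1 : a < 1)
    (hT₁ : 0 < T₁) (hT₂ : 0 < T₂) (hT : T₁ ≠ T₂) (f₁ f₂ : ℝ → ℝ)
    (hf₁ : ∀ p, f₁ p = (S₁ * Real.log p + (1 - S₁) * Real.log (1 - p)) / (T₁ * Real.log a))
    (hf₂ : ∀ p, f₂ p = (S₂ * Real.log p + (1 - S₂) * Real.log (1 - p)) / (T₂ * Real.log a)) :
    ∃ x y : ℝ, ∀ p ∈ Set.Ioo (0:ℝ) 1, f₁ p = f₂ p → p = x ∨ p = y := by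
  have hloga : log a ≠ 0 := (log_neg ha ha1).ne
  have hAB : (T₂ * S₁ - T₁ * S₂) + (T₂ * (1 - S₁) - T₁ * (1 - S₂)) ≠ 0 := by
    rw [show (T₂ * S₁ - T₁ * S₂) + (T₂ * (1 - S₁) - T₁ * (1 - S₂)) = T₂ - T₁ by ring]
    exact sub_ne_zero.mpr hT.symm
  obtain ⟨x, y, hxy⟩ := exists_zeros_subset_pair_mul_log_add_mul_log_one_sub hAB
  refine ⟨x, y, fun p hp hfp ↦ hxy p hp (mul_right_cancel₀ hloga ?_)⟩
  rw [hf₁, hf₂, div_eq_div_iff (mul_ne_zero hT₁.ne' hloga) (mul_ne_zero hT₂.ne' hloga)] at hfp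
  linear_combination hfp

theorem stmt1 (a S₁ S₂ T₁ T₂ : ℝ) (ha : 0 < a) (ha1 : a < 1)
    (hS₁ : S₁ ∈ Set.Ioo (0:ℝ) 1) (hS₂ : S₂ ∈ Set.Ioo (0:ℝ) 1) (hS : S₁ ≤ S₂)
    (hT₁ : 0 < T₁) (hT₂ : 0 < T₂) (hT : T₁ ≠ T₂) (f₁ f₂ : ℝ → ℝ)
    (hf₁ : ∀ p, f₁ p = (S₁ * Real.log p + (1 - S₁) * Real.log (1 - p)) / (T₁ * Real.log a))
    (hf₂ : ∀ p, f₂ p = (S₂ * Real.log p + (1 - S₂) * Real.log (1 - p)) / (T₂ * Real.log a)) :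
    ∃ x y : ℝ, ∀ p ∈ Set.Ioo (0:ℝ) 1, f₁ p = f₂ p → p = x ∨ p = y :=
  stmt1_general a S₁ S₂ T₁ T₂ ha ha1 hT₁ hT₂ hT f₁ f₂ hf₁ hf₂
end

section
/- Let K ≥ 2, 0 < A ≤ B < 1, a : Fin K → ℝ with A ≤ a(i) ≤ B for all i, and let D ≥ 0 satisfy ∑_i a(i)^D = 1. Let p be a probability vector with 0 < p(i) < 1, and let m' be an index minimizing a(i)^D/p(i). Then log p(m') / log a(m') ≤ D. -/
/-
The weights `a i ^ D` and the probabilities `p i` both sum to `1`, so the smallest ratio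
`a i ^ D / p i` is at most `1`, i.e. `a m' ^ D ≤ p m'`. Taking logarithms and dividing by
`log (a m') < 0` gives the claim.
-/

open Finset

theorem le_of_isMin_div_of_sum_le_sum {ι : Type*} [Fintype ι] (w p : ι → ℝ)
    (hp : ∀ i, 0 < p i) (hsum : ∑ i, w i ≤ ∑ i, p i) (m : ι)
    (hm : ∀ i, w m / p m ≤ w i / p i) : w m ≤ p m := by
  have hsum_pos : 0 < ∑ i, p i := sum_pos (fun i _ => hp i) ⟨m, mem_univ m⟩
  have hratio : w m / p m * ∑ i, p i ≤ ∑ i, p i :=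
    calc w m / p m * ∑ i, p i = ∑ i, w m / p m * p i := mul_sum _ _ _
      _ ≤ ∑ i, w i := sum_le_sum fun i _ => (le_div_iff₀ (hp i)).mp (hm i)
      _ ≤ ∑ i, p i := hsum
  have : w m / p m ≤ 1 := (mul_le_iff_le_one_left hsum_pos).mp hratio
  exact (div_le_one (hp m)).mp this

theorem Real.log_div_log_le_of_rpow_le {a p D : ℝ} (ha₀ : 0 < a) (ha₁ : a < 1)
    (h : a ^ D ≤ p) : Real.log p / Real.log a ≤ D := by
  have hlog : D * Real.log a ≤ Real.log p := by
    rw [← Real.log_rpow ha₀]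
    exact Real.log_le_log (Real.rpow_pos_of_pos ha₀ D) h
  rw [div_le_iff_of_neg (Real.log_neg ha₀ ha₁)]
  linarith

theorem stmt6_general (K : ℕ) (A B : ℝ) (hA : 0 < A) (hB : B < 1)
    (a p : Fin K → ℝ) (ha : ∀ i, A ≤ a i ∧ a i ≤ B)
    (D : ℝ) (hDsum : ∑ i, a i ^ D = 1)
    (hp : ∀ i, 0 < p i ∧ p i < 1) (hps : ∑ i, p i = 1)
    (m' : Fin K) (hm' : ∀ i, a m' ^ D / p m' ≤ a i ^ D / p i) :
    Real.log (p m') / Real.log (a m') ≤ D := by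
  have hkey : a m' ^ D ≤ p m' :=
    le_of_isMin_div_of_sum_le_sum (fun i => a i ^ D) p (fun i => (hp i).1)
      (by rw [hDsum, hps]) m' hm'
  exact Real.log_div_log_le_of_rpow_le (hA.trans_le (ha m').1) ((ha m').2.trans_lt hB) hkey

theorem stmt6 (K : ℕ) (hK : 2 ≤ K) (A B : ℝ) (hA : 0 < A) (hAB : A ≤ B) (hB : B < 1)
    (a p : Fin K → ℝ) (ha : ∀ i, A ≤ a i ∧ a i ≤ B)
    (D : ℝ) (hD : 0 ≤ D) (hDsum : ∑ i, a i ^ D = 1)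
    (hp : ∀ i, 0 < p i ∧ p i < 1) (hps : ∑ i, p i = 1)
    (m' : Fin K) (hm' : ∀ i, a m' ^ D / p m' ≤ a i ^ D / p i) :
    Real.log (p m') / Real.log (a m') ≤ D :=
  stmt6_general K A B hA hB a p ha D hDsum hp hps m' hm'
end
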